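/- Let m be a lawful monad and let view : α → β and update : α → β → α form a very well-behaved lens, i.e. (UV) view (update a b) = b, (VU) update a (view a) = a, and (UU) update (update a b) b' = update a b' for all a : α and b, b' : β. Define ϑ : StateT β m γ → StateT α m γ by ϑ n = fun a => do let (c, b') ← n (view a); pure (c, update a b'). Then ϑ is a monad morphism: ϑ (pure c) = pure c for all c : γ, and ϑ (do let c ← n; k c) = (do let c ← ϑ n; ϑ (k c)) for all n : StateT β m γ and k : γ → StateT β m δ. -/

import Mathlib

universe u v

def theta {m : Type u → Type v} [Monad m] {α β γ : Type u}
    (view : α → β) (update : α → β → α) (n : StateT β m γ) : StateT α m γ :=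
  fun a => do
    let (c, b') ← n.run (view a)
    pure (c, update a b')

section Theta

variable {m : Type u → Type v} [Monad m] [LawfulMonad m] {α β γ δ : Type u}
  (view : α → β) (update : α → β → α)

theorem theta_run (n : StateT β m γ) (a : α) :
    (theta view update n).run a = (fun p => (p.1, update a p.2)) <$> n.run (view a) := by
  simp only [theta, StateT.run, map_eq_bind_pure_comp]
  rfl

theorem theta_pure (hVU : ∀ a : α, update a (view a) = a) (c : γ) :
    theta view update (pure c : StateT β m γ) = (pure c : StateT α m γ) :=
  StateT.ext fun a => by simp [theta_run, hVU]

theorem theta_bind (hUV : ∀ (a : α) (b : β), view (update a b) = b)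
    (hUU : ∀ (a : α) (b b' : β), update (update a b) b' = update a b')
    (n : StateT β m γ) (k : γ → StateT β m δ) :
    theta view update (n >>= k) = theta view update n >>= fun c => theta view update (k c) :=
  -- (UV): the continuation on the right reads back the state `n` left; (UU): the two writes merge.
  StateT.ext fun a => by simp [theta_run, hUV, hUU]

end Theta

theorem theta_is_monad_morphism
    {m : Type u → Type v} [Monad m] [LawfulMonad m] {α β : Type u}
    (view : α → β) (update : α → β → α)
    (hUV : ∀ (a : α) (b : β), view (update a b) = b)
    (hVU : ∀ a : α, update a (view a) = a)
    (hUU : ∀ (a : α) (b b' : β), update (update a b) b' = update a b') :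
    (∀ {γ : Type u} (c : γ),
        theta view update (pure c : StateT β m γ) = (pure c : StateT α m γ)) ∧
    (∀ {γ δ : Type u} (n : StateT β m γ) (k : γ → StateT β m δ),
        theta view update ((do let c ← n; k c) : StateT β m δ) =
        ((do let c ← theta view update n; theta view update (k c)) : StateT α m δ)) :=
  ⟨theta_pure view update hVU, theta_bind view update hUV hUU⟩
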